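/- The generator c of Grigorchuk's group acts by the following bit-flipping rule. For every k ≥ 0: c fixes the word 1^k (k ones) and the word 1^k0; and for every bit x and every binary word v, c(1^k 0 x v) = 1^k 0 x̄ v (where x̄ denotes the flipped bit) if k ≡ 0 or 2 (mod 3), while c(1^k 0 x v) = 1^k 0 x v if k ≡ 1 (mod 3). That is, c flips the bit immediately after the first 0 of a word exactly when the number of initial 1's is congruent to 0 or 2 mod 3, and otherwise fixes the word. -/
import Mathlib


/-- The Grigorchuk generator `a`: flips the first bit of a nonempty binary word. -/
def grigA : List Bool → List Bool
  | [] => []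
  | false :: w => true :: w
  | true :: w => false :: w

mutual
  /-- The Grigorchuk generator `b`. -/
  def grigB : List Bool → List Bool
    | [] => []
    | false :: w => false :: grigA w
    | true :: w => true :: grigC w
  /-- The Grigorchuk generator `c`. -/
  def grigC : List Bool → List Bool
    | [] => []
    | false :: w => false :: grigA w
    | true :: w => true :: grigD w
  /-- The Grigorchuk generator `d`. -/
  def grigD : List Bool → List Bool
    | [] => []
    | false :: w => false :: w
    | true :: w => true :: grigB w
end

theorem grigA_involutive : Function.Involutive grigA := by
  intro w
  match w with
  | [] => rfl
  | false :: w => rfl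
  | true :: w => rfl

theorem grigBCD_involutive : ∀ w : List Bool,
    grigB (grigB w) = w ∧ grigC (grigC w) = w ∧ grigD (grigD w) = w
  | [] => ⟨rfl, rfl, rfl⟩
  | false :: w => by
      simp [grigB, grigC, grigD, grigA_involutive w]
  | true :: w => by
      obtain ⟨hb, hc, hd⟩ := grigBCD_involutive w
      simp [grigB, grigC, grigD, hb, hc, hd]

theorem grigB_involutive : Function.Involutive grigB :=
  fun w => (grigBCD_involutive w).1

theorem grigC_involutive : Function.Involutive grigC :=
  fun w => (grigBCD_involutive w).2.1

theorem grigD_involutive : Function.Involutive grigD :=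
  fun w => (grigBCD_involutive w).2.2

theorem grigAux : ∀ k : ℕ,
    (grigB (List.replicate k true) = List.replicate k true ∧
     grigC (List.replicate k true) = List.replicate k true ∧
     grigD (List.replicate k true) = List.replicate k true) ∧
    (grigB (List.replicate k true ++ [false]) = List.replicate k true ++ [false] ∧
     grigC (List.replicate k true ++ [false]) = List.replicate k true ++ [false] ∧
     grigD (List.replicate k true ++ [false]) = List.replicate k true ++ [false]) ∧
    ∀ (x : Bool) (v : List Bool),
      grigB (List.replicate k true ++ false :: x :: v) =
        List.replicate k true ++ false :: (if k % 3 = 2 then x else !x) :: v ∧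
      grigC (List.replicate k true ++ false :: x :: v) =
        List.replicate k true ++ false :: (if k % 3 = 1 then x else !x) :: v ∧
      grigD (List.replicate k true ++ false :: x :: v) =
        List.replicate k true ++ false :: (if k % 3 = 0 then x else !x) :: v := by
  intro k
  induction k with
  | zero =>
    refine ⟨⟨rfl, rfl, rfl⟩, ⟨rfl, rfl, rfl⟩, ?_⟩
    intro x v
    cases x <;> simp [grigB, grigC, grigD, grigA]
  | succ k ih =>
    obtain ⟨⟨hb, hc, hd⟩, ⟨hb0, hc0, hd0⟩, h⟩ := ih
    have e0 : (k + 1) % 3 = 0 ↔ k % 3 = 2 := by omega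
    have e1 : (k + 1) % 3 = 1 ↔ k % 3 = 0 := by omega
    have e2 : (k + 1) % 3 = 2 ↔ k % 3 = 1 := by omega
    refine ⟨⟨?_, ?_, ?_⟩, ⟨?_, ?_, ?_⟩, ?_⟩
    · simp [List.replicate_succ, grigB, hc]
    · simp [List.replicate_succ, grigC, hd]
    · simp [List.replicate_succ, grigD, hb]
    · simp [List.replicate_succ, grigB, hc0]
    · simp [List.replicate_succ, grigC, hd0]
    · simp [List.replicate_succ, grigD, hb0]
    · intro x v
      obtain ⟨hb', hc', hd'⟩ := h x v
      refine ⟨?_, ?_, ?_⟩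
      · simp [List.replicate_succ, grigB, hc', e0, e1, e2]
      · simp [List.replicate_succ, grigC, hd', e0, e1, e2]
      · simp [List.replicate_succ, grigD, hb', e0, e1, e2]

/-- The Grigorchuk generator `c` acts by a bit-flipping rule: it fixes `1^k` and
`1^k 0`, and flips the bit immediately after the first `0` of a word exactly when the
number `k` of initial `1`'s satisfies `k ≡ 0` or `2 (mod 3)`, otherwise fixing the word. -/
theorem grigC_bit_flip_rule : ∀ k : ℕ,
    grigC (List.replicate k true) = List.replicate k true ∧
    grigC (List.replicate k true ++ [false]) = List.replicate k true ++ [false] ∧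
    ∀ (x : Bool) (v : List Bool),
      (k % 3 = 0 ∨ k % 3 = 2 →
        grigC (List.replicate k true ++ false :: x :: v) =
          List.replicate k true ++ false :: (!x) :: v) ∧
      (k % 3 = 1 →
        grigC (List.replicate k true ++ false :: x :: v) =
          List.replicate k true ++ false :: x :: v) := by
  intro k
  obtain ⟨⟨_, hc, _⟩, ⟨_, hc0, _⟩, h⟩ := grigAux k
  refine ⟨hc, hc0, fun x v => ?_⟩
  obtain ⟨_, hc', _⟩ := h x v
  constructor
  · intro hk
    rw [hc']
    have : ¬ k % 3 = 1 := by omega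
    simp [this]
  · intro hk
    rw [hc']
    simp [hk]
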